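/- (Well-definedness of the induced action φ on the quotient, Lemma 1.) The actions Φ and α commute: for every group element (A, w, Q₁, …, Qₙ) ∈ G, every S ∈ SE_{e₃}(3), and every state (P, v, pᵢ), one has Φ((A, w, Qᵢ), α(S, (P, v, pᵢ))) = α(S, Φ((A, w, Qᵢ), (P, v, pᵢ))). -/

import Mathlib

open scoped InnerProductSpace Matrix

noncomputable section

/-- Vectors in ℝ³ with the Euclidean norm. -/
abbrev V3 := EuclideanSpace ℝ (Fin 3)

abbrev Mat3 := Matrix (Fin 3) (Fin 3) ℝ

/-- `R ∈ SO(3)` iff `RᵀR = I` and `det R = 1`. -/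
def SO3 (R : Mat3) : Prop := R.transpose * R = 1 ∧ R.det = 1

/-- Matrix-vector multiplication. -/
def mv (M : Mat3) (q : V3) : V3 := WithLp.toLp 2 (M.mulVec q)

/-- The standard gravity direction `e₃ = (0,0,1)`. -/
def e3 : V3 := WithLp.toLp 2 (![0, 0, 1] : Fin 3 → ℝ)

/-- Elements of SE(3) are pairs `(R, x)`. -/
abbrev SE3 := Mat3 × V3

/-- SE(3) group product: `(R₁,x₁)·(R₂,x₂) = (R₁R₂, x₁ + R₁x₂)`. -/
def seMul (P Q : SE3) : SE3 := (P.1 * Q.1, P.2 + mv P.1 Q.2)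

/-- SE(3) identity `(I, 0)`. -/
def seId : SE3 := (1, 0)

/-- SE(3) inverse: `P⁻¹ = (Rᵀ, −Rᵀx)`. -/
def seInv (P : SE3) : SE3 := (P.1ᵀ, -(mv P.1ᵀ P.2))

/-- Action of SE(3) on ℝ³: `P(q) = R_P q + x_P`. -/
def seAct (P : SE3) (q : V3) : V3 := mv P.1 q + P.2

/-- The subgroup `SE_{e₃}(3) = {(R,x) ∈ SE(3) : R e₃ = e₃}`. -/
def SEe3 : Set SE3 := {S | SO3 S.1 ∧ mv S.1 e3 = e3}

/-- The change-of-reference-frame action `α(S, (P, v, pᵢ)) = (S⁻¹P, v, S⁻¹(pᵢ))`. -/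
def alpha (n : ℕ) (S : SE3) (ξ : SE3 × V3 × (Fin n → V3)) : SE3 × V3 × (Fin n → V3) :=
  (seMul (seInv S) ξ.1, ξ.2.1, fun i => seAct (seInv S) (ξ.2.2 i))

/-- Elements of SOT(3) are pairs `(R_Q, c_Q)`. -/
abbrev SOT3 := Mat3 × ℝ

/-- SOT(3) product `(R₁,c₁)·(R₂,c₂) = (R₁R₂, c₁c₂)`. -/
def sotMul (Q1 Q2 : SOT3) : SOT3 := (Q1.1 * Q2.1, Q1.2 * Q2.2)

/-- SOT(3) inverse `(R_Qᵀ, c_Q⁻¹)`. -/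
def sotInv (Q : SOT3) : SOT3 := (Q.1ᵀ, Q.2⁻¹)

/-- Action of SOT(3) on ℝ³: `Q(q) = c_Q R_Q q`. -/
def sotAct (Q : SOT3) (q : V3) : V3 := Q.2 • mv Q.1 q

/-- Elements of the VI-SLAM group `G = SE₂(3) × SOT(3)ⁿ`. -/
abbrev GVI (n : ℕ) := SE3 × V3 × (Fin n → SOT3)

/-- VI-SLAM group product. -/
def gMul {n : ℕ} (X Y : GVI n) : GVI n :=
  (seMul X.1 Y.1, X.2.1 + mv X.1.1 Y.2.1, fun i => sotMul (X.2.2 i) (Y.2.2 i))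

/-- VI-SLAM group identity `(I₄, 0, (I,1)ᵢ)`. -/
def gId {n : ℕ} : GVI n := (seId, 0, fun _ => (1, 1))

/-- VI-SLAM group inverse `(A⁻¹, −R_Aᵀw, Qᵢ⁻¹)`. -/
def gInv {n : ℕ} (X : GVI n) : GVI n :=
  (seInv X.1, -(mv X.1.1ᵀ X.2.1), fun i => sotInv (X.2.2 i))

/-- Membership in the VI-SLAM group: rotation parts in SO(3), scale parts positive. -/
def gMem {n : ℕ} (X : GVI n) : Prop :=
  SO3 X.1.1 ∧ ∀ i, SO3 (X.2.2 i).1 ∧ 0 < (X.2.2 i).2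

/-- The action `Φ((A, w, Qᵢ), (P, v, pᵢ)) = (PA, R_Aᵀ(v − w), (P A T_C)(Qᵢ⁻¹((P T_C)⁻¹(pᵢ))))`. -/
def Phi {n : ℕ} (TC : SE3) (X : GVI n) (ξ : SE3 × V3 × (Fin n → V3)) :
    SE3 × V3 × (Fin n → V3) :=
  (seMul ξ.1 X.1, mv X.1.1ᵀ (ξ.2.1 - X.2.1),
    fun i => seAct (seMul (seMul ξ.1 X.1) TC)
      (sotAct (sotInv (X.2.2 i)) (seAct (seInv (seMul ξ.1 TC)) (ξ.2.2 i))))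

/-! `α` translates the pose and the landmarks on the left by `S⁻¹`, while `Φ` acts on the pose on
the right and moves each landmark only through its coordinates `(P T_C)⁻¹(pᵢ)` in the camera frame.
These coordinates are unchanged when pose and landmark are translated together, so the two actions
commute for every rigid motion `S`. -/

lemma mv_mul (A B : Mat3) (q : V3) : mv (A * B) q = mv A (mv B q) := by
  simp [mv, Matrix.mulVec_mulVec]

lemma mv_add (A : Mat3) (p q : V3) : mv A (p + q) = mv A p + mv A q := by
  ext i; simp [mv, Matrix.mulVec_add]

lemma mv_neg (A : Mat3) (q : V3) : mv A (-q) = -mv A q := by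
  ext i; simp [mv, Matrix.mulVec_neg]

lemma mv_one (q : V3) : mv 1 q = q := by
  simp [mv]

lemma SO3.mul_transpose_self {R : Mat3} (hR : SO3 R) : R * Rᵀ = 1 :=
  mul_eq_one_comm.mp hR.1

lemma seMul_assoc (P Q R : SE3) : seMul (seMul P Q) R = seMul P (seMul Q R) := by
  simp [seMul, mv_mul, mv_add, mul_assoc, add_assoc]

lemma seAct_seMul (P Q : SE3) (q : V3) : seAct (seMul P Q) q = seAct P (seAct Q q) := by
  simp only [seAct, seMul, mv_mul, mv_add]
  abel

lemma seInv_seMul (P Q : SE3) (hP : P.1ᵀ * P.1 = 1) :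
    seInv (seMul P Q) = seMul (seInv Q) (seInv P) := by
  simp [seInv, seMul, Matrix.transpose_mul, mv_add, mv_neg, ← mv_mul, mul_assoc, hP]

lemma seInv_seInv (S : SE3) (hS : S.1 * S.1ᵀ = 1) : seInv (seInv S) = S := by
  simp [seInv, mv_neg, ← mv_mul, hS, mv_one]

lemma seAct_seAct_seInv (S : SE3) (hS : S.1 * S.1ᵀ = 1) (q : V3) :
    seAct S (seAct (seInv S) q) = q := by
  simp [seAct, seInv, mv_add, mv_neg, ← mv_mul, hS, mv_one]

lemma seAct_seInv_seMul_seInv (S P : SE3) (hS : S.1 * S.1ᵀ = 1) (q : V3) :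
    seAct (seInv (seMul (seInv S) P)) (seAct (seInv S) q) = seAct (seInv P) q := by
  have hSinv : (seInv S).1ᵀ * (seInv S).1 = 1 := by simpa [seInv] using hS
  rw [seInv_seMul _ _ hSinv, seInv_seInv _ hS, seAct_seMul, seAct_seAct_seInv _ hS]

theorem Phi_alpha_commute_general (n : ℕ) (TC : SE3)
    (X : GVI n) (S : SE3) (hS : S ∈ SEe3)
    (ξ : SE3 × V3 × (Fin n → V3)) :
    Phi TC X (alpha n S ξ) = alpha n S (Phi TC X ξ) := by
  have hS_orth : S.1 * S.1ᵀ = 1 := hS.1.mul_transpose_self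
  refine Prod.ext (seMul_assoc _ _ _) (Prod.ext rfl (funext fun i => ?_))
  simp only [Phi, alpha]
  rw [seMul_assoc (seInv S) ξ.1 TC, seAct_seInv_seMul_seInv S _ hS_orth,
    seMul_assoc (seInv S), seMul_assoc (seInv S), seAct_seMul]

/-- (Well-definedness of the induced action on the quotient, Lemma 1.)
The actions `Φ` and `α` commute. -/
theorem Phi_alpha_commute (n : ℕ) (hn : 1 ≤ n) (TC : SE3) (hTC : SO3 TC.1)
    (X : GVI n) (hX : gMem X) (S : SE3) (hS : S ∈ SEe3)
    (ξ : SE3 × V3 × (Fin n → V3)) (hP : SO3 ξ.1.1) :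
    Phi TC X (alpha n S ξ) = alpha n S (Phi TC X ξ) :=
  Phi_alpha_commute_general n TC X S hS ξ
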